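/- arXiv:1802.01785 — 2 statements merged into one kernel-verified Lean document; each statement's English description precedes it below -/
import Mathlib

section
/- Under the hypotheses S'(q) = −(3/2)((5/3)P(q) − q P'(q))/q², 0 < (5/3)P(q) − q P'(q) ≤ c q, and lim_{q→∞} S(q)=0, the entropy satisfies the bound 0 < S(q) ≤ (3c/2)(1/q) for all q > 0. -/
/-!
`S` is strictly decreasing with limit `0`, hence positive. For the upper bound, the hypothesis
`(5/3)P − qP' ≤ c` says exactly that `S'(q) ≥ (d/dq) (3c/2)/q`, so `S − (3c/2)/q` is
nondecreasing; it also tends to `0`, hence is nonpositive.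
-/

open Set Filter Topology

section LimitAtTop

variable {f f' : ℝ → ℝ} {a l x : ℝ}

theorem MonotoneOn.le_of_tendsto_atTop_of_mem_Ioi (hf : MonotoneOn f (Ioi a))
    (hl : Tendsto f atTop (𝓝 l)) (hx : a < x) : f x ≤ l :=
  ge_of_tendsto hl <| (eventually_ge_atTop x).mono fun _ hy =>
    hf hx (hx.trans_le hy) hy

theorem AntitoneOn.le_of_tendsto_atTop_of_mem_Ioi (hf : AntitoneOn f (Ioi a))
    (hl : Tendsto f atTop (𝓝 l)) (hx : a < x) : l ≤ f x :=
  le_of_tendsto hl <| (eventually_ge_atTop x).mono fun _ hy =>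
    hf hx (hx.trans_le hy) hy

theorem StrictAntiOn.lt_of_tendsto_atTop_of_mem_Ioi (hf : StrictAntiOn f (Ioi a))
    (hl : Tendsto f atTop (𝓝 l)) (hx : a < x) : l < f x :=
  calc l ≤ f (x + 1) := hf.antitoneOn.le_of_tendsto_atTop_of_mem_Ioi hl (by linarith)
    _ < f x := hf hx (show a < x + 1 by linarith) (by linarith)

theorem le_of_tendsto_atTop_of_hasDerivAt_nonneg (hf : ∀ y, a < y → HasDerivAt f (f' y) y)
    (hf' : ∀ y, a < y → 0 ≤ f' y) (hl : Tendsto f atTop (𝓝 l)) (hx : a < x) : f x ≤ l := by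
  have hmono : MonotoneOn f (Ioi a) :=
    monotoneOn_of_hasDerivWithinAt_nonneg (convex_Ioi a)
      (fun y hy => (hf y hy).continuousAt.continuousWithinAt)
      (fun y hy => (hf y (by rwa [interior_Ioi] at hy)).hasDerivWithinAt)
      (fun y hy => hf' y (by rwa [interior_Ioi] at hy))
  exact hmono.le_of_tendsto_atTop_of_mem_Ioi hl hx

theorem lt_of_tendsto_atTop_of_hasDerivAt_neg (hf : ∀ y, a < y → HasDerivAt f (f' y) y)
    (hf' : ∀ y, a < y → f' y < 0) (hl : Tendsto f atTop (𝓝 l)) (hx : a < x) : l < f x := by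
  have hanti : StrictAntiOn f (Ioi a) :=
    strictAntiOn_of_hasDerivWithinAt_neg (convex_Ioi a)
      (fun y hy => (hf y hy).continuousAt.continuousWithinAt)
      (fun y hy => (hf y (by rwa [interior_Ioi] at hy)).hasDerivWithinAt)
      (fun y hy => hf' y (by rwa [interior_Ioi] at hy))
  exact hanti.lt_of_tendsto_atTop_of_mem_Ioi hl hx

end LimitAtTop

theorem stmt9_general (P P' S : ℝ → ℝ) (c : ℝ)
    (hS : ∀ q : ℝ, 0 < q →
      HasDerivAt S (-(3 / 2) * ((5 / 3) * P q - P' q * q) / q ^ 2) q)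
    (hpos : ∀ q : ℝ, 0 < q → 0 < (5 / 3) * P q - q * P' q)
    (hbd : ∀ q : ℝ, 0 < q → (5 / 3) * P q - q * P' q ≤ c)
    (hlim : Filter.Tendsto S Filter.atTop (nhds 0)) :
    ∀ q : ℝ, 0 < q → 0 < S q ∧ S q ≤ (3 * c / 2) / q := by
  intro q hq
  have hrecip : ∀ y : ℝ, 0 < y →
      HasDerivAt (fun y => (3 * c / 2) / y) (-(3 / 2) * c / y ^ 2) y := fun y hy => by
    have h := (hasDerivAt_inv hy.ne').const_mul (3 * c / 2)
    simp only [← div_eq_mul_inv] at h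
    exact h.congr_deriv (by ring)
  have hgap : Tendsto (fun y => S y - (3 * c / 2) / y) atTop (𝓝 0) := by
    simpa using hlim.sub (tendsto_const_nhds.div_atTop tendsto_id)
  refine ⟨lt_of_tendsto_atTop_of_hasDerivAt_neg hS (fun y hy => ?_) hlim hq, ?_⟩
  · have := hpos y hy
    exact div_neg_of_neg_of_pos (by linarith [mul_comm y (P' y)]) (by positivity)
  · have hgap_nonpos : S q - (3 * c / 2) / q ≤ 0 :=
      le_of_tendsto_atTop_of_hasDerivAt_nonneg (f := fun y => S y - (3 * c / 2) / y)
        (fun y hy => (hS y hy).sub (hrecip y hy)) (fun y hy => ?_) hgap hq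
    · linarith
    have := hbd y hy
    rw [← sub_div]
    exact div_nonneg (by linarith [mul_comm y (P' y)]) (by positivity)

/-- Under `S'(q) = −(3/2)((5/3)P(q) − q P'(q))/q²`, `0 < (5/3)P(q) − q P'(q) ≤ c`,
and `S(q) → 0` as `q → ∞`, one has `0 < S(q) ≤ (3c/2)/q` for all `q > 0`. -/
theorem stmt9 (P P' S : ℝ → ℝ) (c : ℝ) (hc : 0 < c)
    (hS : ∀ q : ℝ, 0 < q →
      HasDerivAt S (-(3 / 2) * ((5 / 3) * P q - P' q * q) / q ^ 2) q)
    (hpos : ∀ q : ℝ, 0 < q → 0 < (5 / 3) * P q - q * P' q)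
    (hbd : ∀ q : ℝ, 0 < q → (5 / 3) * P q - q * P' q ≤ c)
    (hlim : Filter.Tendsto S Filter.atTop (nhds 0)) :
    ∀ q : ℝ, 0 < q → 0 < S q ∧ S q ≤ (3 * c / 2) / q :=
  stmt9_general P P' S c hS hpos hbd hlim
end

section
/- Let H_θ̃(ρ,θ) = ρ(e(ρ,θ) − θ̃ s(ρ,θ)) be the ballistic free energy, C² in ρ. Under Gibbs' relation, ∂²H_θ̃/∂ρ²(ρ,θ̃) = (1/ρ) ∂p/∂ρ(ρ,θ̃); in particular, under the thermodynamic stability hypothesis ∂p/∂ρ > 0, the map ρ ↦ H_θ̃(ρ,θ̃) is strictly convex. -/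
/-- Under Gibbs' relation at temperature `θ̃`, the ballistic free energy
`H(ρ) = ρ(e(ρ) − θ̃ s(ρ))` (with `e, s, p` evaluated at `θ = θ̃`) satisfies
`H''(ρ) = (1/ρ) ∂_ρ p(ρ)`; hence under thermodynamic stability `∂_ρ p > 0`
the map `ρ ↦ H(ρ)` is strictly convex on `(0,∞)`. -/
theorem stmt12 (e s p p' : ℝ → ℝ) (θt : ℝ) (hθt : 0 < θt)
    (he : ContDiff ℝ 2 e) (hs : ContDiff ℝ 2 s)
    (hp : ∀ ρ : ℝ, 0 < ρ → HasDerivAt p (p' ρ) ρ)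
    (hGibbs : ∀ ρ : ℝ, 0 < ρ → θt * deriv s ρ = deriv e ρ - p ρ / ρ ^ 2)
    (hstab : ∀ ρ : ℝ, 0 < ρ → 0 < p' ρ) :
    (∀ ρ : ℝ, 0 < ρ →
        deriv (deriv (fun r : ℝ => r * (e r - θt * s r))) ρ = (1 / ρ) * p' ρ) ∧
      StrictConvexOn ℝ (Set.Ioi (0 : ℝ)) (fun r : ℝ => r * (e r - θt * s r)) := by
  have hed : Differentiable ℝ e := he.differentiable (by norm_num)
  have hsd : Differentiable ℝ s := hs.differentiable (by norm_num)
  set H : ℝ → ℝ := fun r : ℝ => r * (e r - θt * s r) with hHdef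
  have hH' : ∀ r : ℝ, HasDerivAt H
      ((e r - θt * s r) + r * (deriv e r - θt * deriv s r)) r := by
    intro r
    have h1 : HasDerivAt (fun x : ℝ => e x - θt * s x)
        (deriv e r - θt * deriv s r) r :=
      ((hed r).hasDerivAt).sub (((hsd r).hasDerivAt).const_mul θt)
    have := (hasDerivAt_id r).mul h1
    simp only [id_eq, one_mul] at this; exact this
  have hderivH : deriv H = fun r : ℝ =>
      (e r - θt * s r) + r * (deriv e r - θt * deriv s r) := by
    funext r; exact (hH' r).deriv
  have hkey : ∀ ρ : ℝ, 0 < ρ →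
      deriv (deriv H) ρ = (1 / ρ) * p' ρ := by
    intro ρ hρ
    have hρ0 : ρ ≠ 0 := ne_of_gt hρ
    -- on Ioi 0, deriv H coincides with g
    set g : ℝ → ℝ := fun r : ℝ => (e r - θt * s r) + p r / r with hg
    have heq : deriv H =ᶠ[nhds ρ] g := by
      filter_upwards [Ioi_mem_nhds hρ] with r hr
      have hr0 : (0:ℝ) < r := hr
      have := hGibbs r hr0
      rw [hderivH]
      have h2 : deriv e r - θt * deriv s r = p r / r ^ 2 := by linarith
      have hr0' : r ≠ 0 := ne_of_gt hr0
      have : r * (deriv e r - θt * deriv s r) = p r / r := by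
        rw [h2]; field_simp
      simp [hg, this]
    have hg' : HasDerivAt g
        ((deriv e ρ - θt * deriv s ρ) + (p' ρ * ρ - p ρ * 1) / ρ ^ 2) ρ := by
      have h1 : HasDerivAt (fun x : ℝ => e x - θt * s x)
          (deriv e ρ - θt * deriv s ρ) ρ :=
        ((hed ρ).hasDerivAt).sub (((hsd ρ).hasDerivAt).const_mul θt)
      exact h1.add ((hp ρ hρ).div (hasDerivAt_id ρ) hρ0)
    rw [heq.deriv_eq, hg'.deriv]
    have hGe : deriv e ρ - θt * deriv s ρ = p ρ / ρ ^ 2 := by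
      have := hGibbs ρ hρ; linarith
    rw [hGe]
    field_simp
    ring
  refine ⟨hkey, ?_⟩
  have hconv : StrictConvexOn ℝ (Set.Ioi (0:ℝ)) H := by
    apply strictConvexOn_of_deriv2_pos (convex_Ioi 0)
    · exact Continuous.continuousOn (by fun_prop)
    · intro x hx
      rw [interior_Ioi] at hx
      have hx0 : (0:ℝ) < x := hx
      have := hkey x hx0
      simp only [Function.iterate_succ, Function.iterate_zero, Function.comp, id]
      rw [this]
      have := hstab x hx0
      positivity
  exact hconv
end
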